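/- arXiv:1011.1462 — 4 statements merged into one kernel-verified Lean document; each statement's English description precedes it below -/
import Mathlib

section
/- Let E ⊆ ℝ^d be a Borel set translation congruent to Q = [0,1)^d, and let μ be Lebesgue measure restricted to E. Then the exponentials {e_n : n ∈ ℤ^d} form an orthonormal basis of L²(μ); that is, ℤ^d is a spectrum for μ. -/
open MeasureTheory Complex

/-- The exponential `e_λ(x) = exp(2πi λ·x)` on `ℝ^d`. -/
noncomputable def expFn {d : ℕ} (lam x : Fin d → ℝ) : ℂ :=
  Complex.exp (2 * Real.pi * Complex.I * (∑ i, lam i * x i))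

/-- The unit cube `Q = [0,1)^d`. -/
def unitCube (d : ℕ) : Set (Fin d → ℝ) := {x | ∀ i, x i ∈ Set.Ico (0 : ℝ) 1}

/-!
Reduction modulo `ℤ^d` maps `E` injectively onto the torus `ℝ^d / ℤ^d`: every coset meets
`[0,1)^d` exactly once, and `E` is `[0,1)^d` with its pieces moved by integer vectors. Moving the
pieces does not change their images, so the reduction map carries Lebesgue measure on `E` to Haar
measure on the torus, and `e_n` is the pull-back of the character `mFourier n`. Orthonormality and
completeness of the exponentials in `L²(E)` are thus those of the characters on the torus; for
completeness one also needs every `f ∈ L²(E)` to be a pull-back, which holds because, by the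
Lusin–Souslin theorem, the injective reduction map has a measurable left inverse on `E`.
-/

open Set Function UnitAddTorus
open scoped ComplexConjugate

def IsL2Complete {X ι : Type*} [MeasurableSpace X] (μ : Measure X) (χ : ι → X → ℂ) : Prop :=
  ∀ f : X → ℂ, MemLp f 2 μ → (∀ n, ∫ x, f x * conj (χ n x) ∂μ = 0) → f =ᵐ[μ] 0

section Transfer

variable {X Y : Type*} [MeasurableSpace X] [MeasurableSpace Y] {μ : Measure X} {ν : Measure Y}
  {π : X → Y} {σ : Y → X}

theorem MeasureTheory.MeasurePreserving.of_ae_leftInverse (hπ : MeasurePreserving π μ ν)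
    (hσ : Measurable σ) (hσπ : ∀ᵐ x ∂μ, σ (π x) = x) : MeasurePreserving σ ν μ := by
  refine ⟨hσ, ?_⟩
  rw [← hπ.map_eq, Measure.map_map hσ hπ.measurable,
    Measure.map_congr (f := σ ∘ π) (g := id) hσπ, Measure.map_id]

theorem IsL2Complete.comp_measurePreserving {ι : Type*} {χ : ι → Y → ℂ} (hχ : IsL2Complete ν χ)
    (hχm : ∀ n, AEStronglyMeasurable (χ n) ν) (hπ : MeasurePreserving π μ ν) (hσ : Measurable σ)
    (hσπ : ∀ᵐ x ∂μ, σ (π x) = x) :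
    IsL2Complete μ fun n => χ n ∘ π := by
  intro f hf hcoef
  have hσ' := hπ.of_ae_leftInverse hσ hσπ
  have hfσπ : (f ∘ σ) ∘ π =ᵐ[μ] f := hσπ.mono fun x hx => congrArg f hx
  have hfσ : f ∘ σ =ᵐ[ν] 0 := by
    refine hχ _ (hf.comp_measurePreserving hσ') fun n => ?_
    rw [← hπ.map_eq, integral_map hπ.aemeasurable, ← hcoef n]
    · exact integral_congr_ae (hfσπ.mul ae_eq_rfl)
    · rw [hπ.map_eq]
      exact (hf.1.comp_measurePreserving hσ').mul (hχm n).star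
  exact hfσπ.symm.trans (hπ.quasiMeasurePreserving.ae_eq_comp hfσ)

end Transfer

theorem Measurable.exists_measurable_leftInvOn {X Y : Type*} [MeasurableSpace X]
    [StandardBorelSpace X] [MeasurableSpace Y] [MeasurableSpace.CountablySeparated Y] [Nonempty X]
    {f : X → Y} {s : Set X} (hf : Measurable f) (hs : MeasurableSet s) (hinj : InjOn f s) :
    ∃ g : Y → X, Measurable g ∧ LeftInvOn g f s := by
  have := hs.standardBorel
  have hemb : MeasurableEmbedding (s.domRestrict f) :=
    (hf.comp measurable_subtype_coe).measurableEmbedding (injOn_iff_injective.mp hinj)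
  obtain ⟨g, hg, hgf⟩ := hemb.exists_measurable_extend measurable_subtype_coe fun _ => inferInstance
  exact ⟨g, hg, fun x hx => congrFun hgf ⟨x, hx⟩⟩

theorem MeasureTheory.Measure.map_restrict_iUnion_image_add_right {G Y ι : Type*} [AddGroup G]
    [MeasurableSpace G] [MeasurableAdd G] {μ : Measure G} [μ.IsAddRightInvariant]
    [MeasurableSpace Y] [Countable ι] {π : G → Y} (hπ : Measurable π) {v : ι → G}
    (hπv : ∀ k x, π (x + v k) = π x) {A : ι → Set G} (hA : ∀ k, MeasurableSet (A k))
    (hAd : Pairwise (Disjoint on A)) (hAvd : Pairwise (Disjoint on fun k => (· + v k) '' A k)) :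
    (μ.restrict (⋃ k, (· + v k) '' A k)).map π = (μ.restrict (⋃ k, A k)).map π := by
  have hemb k := (MeasurableEquiv.addRight (v k)).measurableEmbedding
  rw [Measure.restrict_iUnion hAvd fun k => (hemb k).measurableSet_image.mpr (hA k),
    Measure.restrict_iUnion hAd hA, Measure.map_sum hπ.aemeasurable,
    Measure.map_sum hπ.aemeasurable]
  congr 1
  funext k
  rw [← ((measurePreserving_add_right μ (v k)).restrict_image_emb (hemb k) (A k)).map_eq,
    Measure.map_map hπ (measurable_add_const _)]
  exact congrArg (Measure.map · _) (funext (hπv k))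

theorem unitCube_eq_pi (d : ℕ) : unitCube d = univ.pi fun _ => Ico 0 1 := by
  ext x
  simp [unitCube]

namespace UnitAddTorus

/-- `Mathlib.Analysis.Fourier.AddCircleMulti` states its results for this measure, through a local
`MeasureSpace` instance on `UnitAddCircle`. -/
theorem volume_eq_pi_haarAddCircle {ι : Type*} [Fintype ι] :
    (volume : Measure (UnitAddTorus ι)) = Measure.pi fun _ => AddCircle.haarAddCircle := by
  rw [volume_pi, AddCircle.volume_eq_smul_haarAddCircle, ENNReal.ofReal_one, one_smul]

theorem integral_mFourier_mul_conj {ι : Type*} [Fintype ι] (n m : ι → ℤ) :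
    ∫ t : UnitAddTorus ι, mFourier n t * conj (mFourier m t) = if n = m then 1 else 0 := by
  rw [volume_eq_pi_haarAddCircle]
  have h := orthonormal_iff_ite.mp orthonormal_mFourier m n
  rw [ContinuousMap.inner_toLp] at h
  simp only [eq_comm (a := m)] at h
  exact h

theorem isL2Complete_mFourier {ι : Type*} [Fintype ι] :
    IsL2Complete (volume : Measure (UnitAddTorus ι)) fun n => mFourier n := by
  rw [volume_eq_pi_haarAddCircle]
  intro g hg hcoef
  have hrepr : mFourierBasis.repr (hg.toLp g) = 0 := by
    ext n
    rw [mFourierBasis_repr, mFourierCoeff, lp.coeFn_zero, Pi.zero_apply, ← hcoef n]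
    refine integral_congr_ae ?_
    filter_upwards [hg.coeFn_toLp] with t ht
    rw [ht, mFourier_neg, smul_eq_mul, mul_comm]
  have hzero : hg.toLp g = 0 := by simpa using hrepr
  exact (hg.toLp_eq_toLp_iff MemLp.zero).mp hzero

def mk {ι : Type*} (x : ι → ℝ) : UnitAddTorus ι := fun i => x i

theorem measurable_mk {ι : Type*} [Fintype ι] : Measurable (mk (ι := ι)) :=
  measurable_pi_lambda _ fun i => AddCircle.measurable_mk'.comp (measurable_pi_apply i)

@[simp]
theorem mk_add_intCast {ι : Type*} (x : ι → ℝ) (k : ι → ℤ) :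
    mk (x + fun i => (k i : ℝ)) = mk x := by
  funext i
  simp [mk]

theorem injOn_mk_unitCube {d : ℕ} : InjOn mk (unitCube d) := fun x hx y hy hxy =>
  funext fun i => (AddCircle.coe_eq_coe_iff_of_mem_Ico (a := 0) (by simpa using hx i)
    (by simpa using hy i)).mp (congrFun hxy i)

theorem measurePreserving_mk_unitCube {d : ℕ} :
    MeasurePreserving mk (volume.restrict (unitCube d)) volume := by
  have hcube : unitCube d =ᵐ[volume] univ.pi fun _ => Ioc (0 : ℝ) (0 + 1) := by
    rw [unitCube_eq_pi, volume_pi, zero_add]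
    exact Measure.ae_eq_set_pi fun _ _ => Ico_ae_eq_Ioc
  rw [Measure.restrict_congr_set hcube, volume_pi, Measure.restrict_pi_pi]
  exact measurePreserving_pi _ _ fun _ => UnitAddCircle.measurePreserving_mk 0

end UnitAddTorus

theorem expFn_intCast_eq_mFourier_mk {d : ℕ} (n : Fin d → ℤ) (x : Fin d → ℝ) :
    expFn (fun i => (n i : ℝ)) x = mFourier n (UnitAddTorus.mk x) := by
  simp only [expFn, mFourier, ContinuousMap.coe_mk, UnitAddTorus.mk, fourier_coe_apply,
    ← Complex.exp_sum]
  rw [Complex.ofReal_sum, Finset.mul_sum]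
  refine congrArg _ (Finset.sum_congr rfl fun i _ => ?_)
  push_cast
  ring

section TranslationCongruent

variable {d : ℕ} {Ek : (Fin d → ℤ) → Set (Fin d → ℝ)}

theorem eq_of_mem_of_mk_eq (hdisj : Pairwise (Disjoint on Ek)) (hcover : ⋃ k, Ek k = unitCube d)
    {k j : Fin d → ℤ} {z w : Fin d → ℝ} (hz : z ∈ Ek k) (hw : w ∈ Ek j)
    (h : UnitAddTorus.mk z = UnitAddTorus.mk w) : k = j ∧ z = w := by
  have hsub : ∀ k, Ek k ⊆ unitCube d := fun k => hcover ▸ subset_iUnion Ek k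
  have hzw : z = w := UnitAddTorus.injOn_mk_unitCube (hsub k hz) (hsub j hw) h
  subst hzw
  exact ⟨by_contra fun hkj => disjoint_left.mp (hdisj hkj) hz hw, rfl⟩

theorem pairwise_disjoint_image_add_intCast (hdisj : Pairwise (Disjoint on Ek))
    (hcover : ⋃ k, Ek k = unitCube d) :
    Pairwise (Disjoint on fun k => (fun x => x + fun i => (k i : ℝ)) '' Ek k) := by
  intro k j hkj
  rw [Function.onFun, disjoint_left]
  rintro _ ⟨z, hz, rfl⟩ ⟨w, hw, hwz⟩
  refine hkj (eq_of_mem_of_mk_eq hdisj hcover hz hw ?_).1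
  simpa using congrArg UnitAddTorus.mk hwz.symm

theorem injOn_mk_iUnion_image_add_intCast (hdisj : Pairwise (Disjoint on Ek))
    (hcover : ⋃ k, Ek k = unitCube d) :
    InjOn UnitAddTorus.mk (⋃ k, (fun x => x + fun i => (k i : ℝ)) '' Ek k) := by
  simp only [InjOn, mem_iUnion]
  rintro _ ⟨k, z, hz, rfl⟩ _ ⟨j, w, hw, rfl⟩ h
  obtain ⟨rfl, rfl⟩ := eq_of_mem_of_mk_eq hdisj hcover hz hw (by simpa using h)
  rfl

theorem measurePreserving_mk_iUnion_image_add_intCast (hEkmeas : ∀ k, MeasurableSet (Ek k))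
    (hdisj : Pairwise (Disjoint on Ek)) (hcover : ⋃ k, Ek k = unitCube d) :
    MeasurePreserving UnitAddTorus.mk
      (volume.restrict (⋃ k, (fun x => x + fun i => (k i : ℝ)) '' Ek k)) volume := by
  refine ⟨UnitAddTorus.measurable_mk, ?_⟩
  rw [Measure.map_restrict_iUnion_image_add_right UnitAddTorus.measurable_mk
    (fun k x => UnitAddTorus.mk_add_intCast x k) hEkmeas hdisj
    (pairwise_disjoint_image_add_intCast hdisj hcover), hcover]
  exact UnitAddTorus.measurePreserving_mk_unitCube.map_eq

end TranslationCongruent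

/-- if `E` is translation congruent to `Q = [0,1)^d` and `μ` is Lebesgue measure
restricted to `E`, then `{e_n : n ∈ ℤ^d}` is an orthonormal basis of `L²(μ)` (orthonormality
together with completeness), i.e. `ℤ^d` is a spectrum for `μ`. -/
theorem stmt4 (d : ℕ) (E : Set (Fin d → ℝ)) (hE : MeasurableSet E)
    (Ek : (Fin d → ℤ) → Set (Fin d → ℝ))
    (hEkmeas : ∀ k, MeasurableSet (Ek k))
    (hdisj : Pairwise (Function.onFun Disjoint Ek))
    (hcover : (⋃ k, Ek k) = unitCube d)
    (hEdecomp : E = ⋃ k : Fin d → ℤ, (fun x => x + fun i => (k i : ℝ)) '' Ek k)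
    (μ : Measure (Fin d → ℝ)) (hμ : μ = volume.restrict E) :
    (∀ n m : Fin d → ℤ,
      ∫ x, expFn (fun i => (n i : ℝ)) x * (starRingEnd ℂ) (expFn (fun i => (m i : ℝ)) x) ∂μ
        = if n = m then 1 else 0) ∧
    (∀ f : (Fin d → ℝ) → ℂ, MemLp f 2 μ →
      (∀ n : Fin d → ℤ,
        ∫ x, f x * (starRingEnd ℂ) (expFn (fun i => (n i : ℝ)) x) ∂μ = 0) →
      f =ᵐ[μ] 0) := by
  subst hμ hEdecomp
  have hπ := measurePreserving_mk_iUnion_image_add_intCast hEkmeas hdisj hcover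
  obtain ⟨σ, hσ, hσπ⟩ := UnitAddTorus.measurable_mk.exists_measurable_leftInvOn hE
    (injOn_mk_iUnion_image_add_intCast hdisj hcover)
  simp only [expFn_intCast_eq_mFourier_mk]
  refine ⟨fun n m => ?_, ?_⟩
  · rw [← UnitAddTorus.integral_mFourier_mul_conj, ← hπ.map_eq,
      integral_map hπ.aemeasurable (by fun_prop)]
  · exact UnitAddTorus.isL2Complete_mFourier.comp_measurePreserving
      (fun n => (mFourier n).continuous.aestronglyMeasurable) hπ hσ
      ((ae_restrict_mem hE).mono hσπ)
end

section
/- Let t ∈ ℝ^d have the property that e^{2πi k·t} = e^{2πi k₀·t} implies k = k₀ for k, k₀ ∈ ℤ^d (e.g., t with rationally independent irrational coordinates together with 1). If φ ≥ 0 satisfies ∑_k φ(x+k) = 1 and |∑_k e^{2πi k·t} φ(x+k)| = 1 for a.e. x (for a suitable family of such t), then for a.e. x there is a unique k₀ ∈ ℤ^d with φ(x+k₀) ≠ 0, and φ(x+k₀) = 1; i.e., φ is a.e. the indicator function of a set translation congruent to [0,1)^d. -/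
/-!
Choose `t` so that the characters `k ↦ e^{2πi k·t}` are pairwise distinct; such `t` exist since
the exceptional set is a countable union of affine hyperplanes `m·t = n`, a null set. At almost
every `x` the numbers `φ(x+k)` are then convex weights on distinct unit vectors `e^{2πi k·t}`
whose barycentre has norm one. In a real inner product space this forces all vectors carrying
positive weight to coincide with the barycentre `S`, because
`∑ aₖ ‖cₖ - S‖² = 2 ∑ aₖ - 2 ⟪∑ aₖ cₖ, S⟫ = 2 - 2‖S‖² = 0`. By distinctness only one weight is
nonzero, and it equals one.
-/

open MeasureTheory Complex

section StrictConvexity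

variable {ι E : Type*} [NormedAddCommGroup E] [InnerProductSpace ℝ E]

theorem eq_tsum_smul_of_norm_tsum_smul_eq_one {a : ι → ℝ} {c : ι → E} (hc : ∀ i, ‖c i‖ = 1)
    (ha : ∀ i, 0 ≤ a i) (hsum : ∑' i, a i = 1) (hnorm : ‖∑' i, a i • c i‖ = 1) {i : ι}
    (hi : a i ≠ 0) : c i = ∑' j, a j • c j := by
  set S := ∑' j, a j • c j
  have ha_summable : Summable a := by
    by_contra h
    simp [tsum_eq_zero_of_not_summable h] at hsum
  have hS_summable : Summable fun j => a j • c j := by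
    by_contra h
    simp [S, tsum_eq_zero_of_not_summable h] at hnorm
  have hinner : HasSum (fun j => a j * inner ℝ S (c j)) 1 := by
    have h := (innerSL ℝ S).hasSum (hS_summable.hasSum : HasSum _ S)
    simp only [innerSL_apply_apply, inner_smul_right] at h
    rwa [real_inner_self_eq_norm_sq, hnorm, one_pow] at h
  have hdev : HasSum (fun j => a j * ‖c j - S‖ ^ 2) 0 := by
    have h : HasSum (fun j => 2 * a j - 2 * (a j * inner ℝ S (c j))) 0 := by
      simpa using ((hsum ▸ ha_summable.hasSum : HasSum a 1).mul_left 2).sub (hinner.mul_left 2)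
    refine h.congr_fun fun j => ?_
    rw [norm_sub_sq_real, hc, hnorm, real_inner_comm]
    ring
  have hterms_nonneg : ∀ j, 0 ≤ a j * ‖c j - S‖ ^ 2 := fun j => mul_nonneg (ha j) (sq_nonneg _)
  have hterm := congrFun ((hasSum_zero_iff_of_nonneg hterms_nonneg).1 hdev) i
  simpa [hi, sub_eq_zero] using hterm

theorem exists_eq_one_of_norm_tsum_smul_eq_one {a : ι → ℝ} {c : ι → E} (hc : ∀ i, ‖c i‖ = 1)
    (hc_inj : Function.Injective c) (ha : ∀ i, 0 ≤ a i) (hsum : ∑' i, a i = 1)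
    (hnorm : ‖∑' i, a i • c i‖ = 1) : ∃ i₀, a i₀ = 1 ∧ ∀ i, i ≠ i₀ → a i = 0 := by
  obtain ⟨i₀, hi₀⟩ : ∃ i₀, a i₀ ≠ 0 := by
    by_contra! h
    simp [h] at hsum
  have hsupp : ∀ i, i ≠ i₀ → a i = 0 := fun i hne => by
    by_contra hi
    refine hne (hc_inj ?_)
    rw [eq_tsum_smul_of_norm_tsum_smul_eq_one hc ha hsum hnorm hi,
      eq_tsum_smul_of_norm_tsum_smul_eq_one hc ha hsum hnorm hi₀]
  exact ⟨i₀, by rwa [tsum_eq_single i₀ hsupp] at hsum, hsupp⟩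

end StrictConvexity

section Hyperplanes

theorem LinearMap.addHaar_preimage_singleton {E : Type*} [NormedAddCommGroup E] [NormedSpace ℝ E]
    [MeasurableSpace E] [BorelSpace E] [FiniteDimensional ℝ E] (μ : Measure E)
    [μ.IsAddHaarMeasure] {f : E →ₗ[ℝ] ℝ} (hf : f ≠ 0) (c : ℝ) : μ (f ⁻¹' {c}) = 0 := by
  rcases Set.eq_empty_or_nonempty (f ⁻¹' {c}) with h | ⟨t₀, ht₀⟩
  · simp [h]
  have htranslate : f ⁻¹' {c} = (· + -t₀) ⁻¹' (LinearMap.ker f : Set E) := by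
    ext t
    simp_all [← sub_eq_add_neg, sub_eq_zero]
  rw [htranslate, measure_preimage_add_right]
  exact Measure.addHaar_submodule μ _ (mt LinearMap.ker_eq_top.1 hf)

variable {ι : Type*} [Fintype ι]

theorem volume_setOf_sum_mul_eq {m : ι → ℝ} (hm : m ≠ 0) (c : ℝ) :
    volume {t : ι → ℝ | ∑ i, m i * t i = c} = 0 := by
  classical
  let f : (ι → ℝ) →ₗ[ℝ] ℝ := ∑ i, m i • LinearMap.proj i
  have hf_apply : ∀ t, f t = ∑ i, m i * t i := fun t => by simp [f]
  have hf : f ≠ 0 := by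
    obtain ⟨i, hi⟩ := Function.ne_iff.1 hm
    refine fun h => hi ?_
    simpa [hf_apply, Pi.single_apply] using LinearMap.congr_fun h (Pi.single i 1)
  simpa [Set.preimage, hf_apply] using LinearMap.addHaar_preimage_singleton volume hf c

theorem ae_sum_intCast_mul_ne_intCast :
    ∀ᵐ t : ι → ℝ, ∀ m : ι → ℤ, m ≠ 0 → ∀ n : ℤ, ∑ i, (m i : ℝ) * t i ≠ n := by
  refine ae_all_iff.2 fun m => ?_
  rcases eq_or_ne m 0 with rfl | hm
  · exact ae_of_all _ fun _ h => absurd rfl h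
  have hm' : (fun i => (m i : ℝ)) ≠ 0 := fun h =>
    hm (funext fun i => by simpa using congrFun h i)
  filter_upwards [ae_all_iff.2 fun n : ℤ =>
    measure_eq_zero_iff_ae_notMem.1 (volume_setOf_sum_mul_eq hm' n)] with t ht _ n
  exact ht n

theorem exists_injective_exp_sum_mul :
    ∃ t : ι → ℝ, Function.Injective fun k : ι → ℤ =>
      exp (2 * Real.pi * I * ∑ i, (k i : ℝ) * t i) := by
  obtain ⟨t, ht⟩ := (ae_sum_intCast_mul_ne_intCast (ι := ι)).exists
  refine ⟨t, fun k k₀ hexp => ?_⟩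
  by_contra hne
  obtain ⟨n, hn⟩ := exp_eq_exp_iff_exists_int.1 hexp
  have h2πI : (2 * Real.pi * I : ℂ) ≠ 0 := by simp [Real.pi_ne_zero]
  have hcomplex : ((∑ i, (k i : ℝ) * t i : ℝ) : ℂ) = (∑ i, (k₀ i : ℝ) * t i : ℝ) + n :=
    mul_left_cancel₀ h2πI (by rw [hn]; ring)
  have hreal : ∑ i, (k i : ℝ) * t i = ∑ i, (k₀ i : ℝ) * t i + n := by exact_mod_cast hcomplex
  refine ht (k - k₀) (sub_ne_zero.2 hne) n ?_
  simp only [Pi.sub_apply, Int.cast_sub, sub_mul, Finset.sum_sub_distrib, hreal]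
  ring

end Hyperplanes

theorem stmt8_general (d : ℕ) (φ : (Fin d → ℝ) → ℝ) (hpos : ∀ x, 0 ≤ φ x)
    (hsum : ∀ᵐ x ∂(volume : Measure (Fin d → ℝ)),
      (∑' k : Fin d → ℤ, φ (x + fun i => (k i : ℝ))) = 1)
    (hmod : ∀ t : Fin d → ℝ,
      (∀ k k₀ : Fin d → ℤ,
        Complex.exp (2 * Real.pi * Complex.I * (∑ i, (k i : ℝ) * t i)) =
          Complex.exp (2 * Real.pi * Complex.I * (∑ i, (k₀ i : ℝ) * t i)) → k = k₀) →
      ∀ᵐ x ∂(volume : Measure (Fin d → ℝ)),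
        ‖∑' k : Fin d → ℤ,
            Complex.exp (2 * Real.pi * Complex.I * (∑ i, (k i : ℝ) * t i)) *
              (φ (x + fun i => (k i : ℝ)))‖ = 1) :
    ∀ᵐ x ∂(volume : Measure (Fin d → ℝ)),
      ∃ k₀ : Fin d → ℤ, φ (x + fun i => (k₀ i : ℝ)) = 1 ∧
        ∀ k : Fin d → ℤ, k ≠ k₀ → φ (x + fun i => (k i : ℝ)) = 0 := by
  obtain ⟨t, ht⟩ := exists_injective_exp_sum_mul (ι := Fin d)
  have hunit : ∀ k : Fin d → ℤ, ‖exp (2 * Real.pi * I * ∑ i, (k i : ℝ) * t i)‖ = 1 := fun k => by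
    simp [norm_exp]
  filter_upwards [hsum, hmod t ht] with x hsx hmx
  simp_rw [mul_comm (exp _), ← real_smul] at hmx
  exact exists_eq_one_of_norm_tsum_smul_eq_one hunit ht (fun k => hpos _) hsx hmx

/-- if `φ ≥ 0` has `ℤ^d`-periodization `1` a.e., and for every `t` whose character
`k ↦ e^{2πi k·t}` separates points of `ℤ^d` we have `|∑_k e^{2πi k·t} φ(x+k)| = 1` a.e. `x`,
then for a.e. `x` there is a unique `k₀ ∈ ℤ^d` with `φ(x+k₀) ≠ 0`, and moreover `φ(x+k₀) = 1`;
i.e. `φ` is a.e. the indicator of a set translation congruent to `[0,1)^d`. -/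
theorem stmt8 (d : ℕ) (φ : (Fin d → ℝ) → ℝ) (hmeas : Measurable φ) (hpos : ∀ x, 0 ≤ φ x)
    (hsum : ∀ᵐ x ∂(volume : Measure (Fin d → ℝ)),
      (∑' k : Fin d → ℤ, φ (x + fun i => (k i : ℝ))) = 1)
    (hmod : ∀ t : Fin d → ℝ,
      (∀ k k₀ : Fin d → ℤ,
        Complex.exp (2 * Real.pi * Complex.I * (∑ i, (k i : ℝ) * t i)) =
          Complex.exp (2 * Real.pi * Complex.I * (∑ i, (k₀ i : ℝ) * t i)) → k = k₀) →
      ∀ᵐ x ∂(volume : Measure (Fin d → ℝ)),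
        ‖∑' k : Fin d → ℤ,
            Complex.exp (2 * Real.pi * Complex.I * (∑ i, (k i : ℝ) * t i)) *
              (φ (x + fun i => (k i : ℝ)))‖ = 1) :
    ∀ᵐ x ∂(volume : Measure (Fin d → ℝ)),
      ∃ k₀ : Fin d → ℤ, φ (x + fun i => (k₀ i : ℝ)) = 1 ∧
        ∀ k : Fin d → ℤ, k ≠ k₀ → φ (x + fun i => (k i : ℝ)) = 0 :=
  stmt8_general d φ hpos hsum hmod
end

section
/- Let μ and μ' be translation equivalent Borel probability measures on ℝ^d, and suppose μ has a spectrum Γ ⊆ ℤ^d. Then Γ is also a spectrum for μ'. -/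
open MeasureTheory Complex

/-- Two Borel measures `μ, μ'` on `ℝ^d` are translation equivalent if there is a partition
`(E_i)` of `μ` and integer vectors `(k_i)` such that `(E_i + k_i)` is a partition of `μ'` and
each translation `x ↦ x + k_i` maps `μ|_{E_i}` onto `μ'|_{E_i + k_i}`. -/
def TranslationEquivalent {d : ℕ} (μ μ' : Measure (Fin d → ℝ)) : Prop :=
  ∃ (I : Type) (_ : Countable I) (E : I → Set (Fin d → ℝ)) (k : I → (Fin d → ℤ)),
    (∀ i, MeasurableSet (E i)) ∧
    μ (Set.univ \ ⋃ i, E i) = 0 ∧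
    (∀ i j, i ≠ j → μ (E i ∩ E j) = 0) ∧
    μ' (Set.univ \ ⋃ i, (fun x => x + fun t => ((k i t : ℝ))) '' E i) = 0 ∧
    (∀ i j, i ≠ j →
      μ' (((fun x => x + fun t => ((k i t : ℝ))) '' E i) ∩
          ((fun x => x + fun t => ((k j t : ℝ))) '' E j)) = 0) ∧
    (∀ i, Measure.map (fun x => x + fun t => ((k i t : ℝ))) (μ.restrict (E i)) =
      μ'.restrict ((fun x => x + fun t => ((k i t : ℝ))) '' E i))

/-!
Gluing the translations `x ↦ x + k_i` on the pieces `E_i` gives a map `S` with `S x - x ∈ ℤ^d`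
for every `x` and `S_* μ = μ'`. Exponentials with integer frequencies are `ℤ^d`-periodic, so
`e_λ ∘ S = e_λ`. Hence the inner products of the `e_λ` in `L²(μ')` and in `L²(μ)` agree, and
`f ↦ f ∘ S` is an isometry `L²(μ') → L²(μ)` sending a function orthogonal to every `e_λ`,
`λ ∈ Γ`, to another such function, which must vanish.
-/

section PushForward

variable {α : Type*} [MeasurableSpace α] {μ : Measure α} {S : α → α}

theorem integral_map_eq_integral_of_comp_eq {E : Type*} [NormedAddCommGroup E] [NormedSpace ℝ E]
    (hS : AEMeasurable S μ) {φ : α → E} (hφ : AEStronglyMeasurable φ (μ.map S))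
    (hφS : ∀ x, φ (S x) = φ x) : ∫ x, φ x ∂μ.map S = ∫ x, φ x ∂μ := by
  simp only [integral_map hS hφ, hφS]

theorem ae_eq_zero_map_of_forall_integral_mul_conj_eq_zero {ι : Type*} (Γ : Set ι)
    (e : ι → α → ℂ) (hS : AEMeasurable S μ) (he : ∀ i ∈ Γ, AEStronglyMeasurable (e i) (μ.map S))
    (heS : ∀ i ∈ Γ, ∀ x, e i (S x) = e i x)
    (hcomplete : ∀ g : α → ℂ, MemLp g 2 μ →
      (∀ i ∈ Γ, ∫ x, g x * starRingEnd ℂ (e i x) ∂μ = 0) → g =ᵐ[μ] 0)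
    {f : α → ℂ} (hf : MemLp f 2 (μ.map S))
    (hfe : ∀ i ∈ Γ, ∫ x, f x * starRingEnd ℂ (e i x) ∂μ.map S = 0) : f =ᵐ[μ.map S] 0 := by
  have hfS : f ∘ S =ᵐ[μ] 0 := by
    refine hcomplete _ (hf.comp_of_map hS) fun i hi => ?_
    have hmeas : AEStronglyMeasurable (fun x => f x * starRingEnd ℂ (e i x)) (μ.map S) :=
      hf.aestronglyMeasurable.mul (he i hi).star
    rw [← hfe i hi, integral_map hS hmeas]
    simp only [Function.comp_apply, heS i hi]
  have hnorm : eLpNorm f 2 (μ.map S) = 0 := by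
    rw [eLpNorm_map_measure hf.aestronglyMeasurable hS, eLpNorm_congr_ae hfS, eLpNorm_zero]
  exact (eLpNorm_eq_zero_iff hf.aestronglyMeasurable two_ne_zero).1 hnorm

end PushForward

section Partition

variable {α ι : Type*} [MeasurableSpace α] [Countable ι] {μ : Measure α} {E : ι → Set α}

theorem ae_forall_eq_of_mem_of_mem (hdisj : ∀ i j, i ≠ j → μ (E i ∩ E j) = 0) :
    ∀ᵐ x ∂μ, ∀ i j, x ∈ E i → x ∈ E j → i = j := by
  simp only [ae_all_iff]
  intro i j
  by_cases hij : i = j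
  · exact ae_of_all _ fun _ _ _ => hij
  · filter_upwards [measure_eq_zero_iff_ae_notMem.1 (hdisj i j hij)] with x hx hi hj
    exact absurd ⟨hi, hj⟩ hx

theorem eq_sum_restrict_of_ae_partition (hE : ∀ i, MeasurableSet (E i))
    (hcov : μ (Set.univ \ ⋃ i, E i) = 0) (hdisj : ∀ i j, i ≠ j → μ (E i ∩ E j) = 0) :
    μ = Measure.sum fun i => μ.restrict (E i) := by
  rw [← Measure.restrict_iUnion_ae (fun i j hij => hdisj i j hij)
    fun i => (hE i).nullMeasurableSet, Measure.restrict_eq_self_of_ae_mem]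
  rw [ae_iff]
  convert hcov using 2
  ext x
  simp

end Partition

theorem measurableSet_image_add_const {G : Type*} [AddGroup G] [MeasurableSpace G]
    [MeasurableAdd G] {E : Set G} (hE : MeasurableSet E) (c : G) :
    MeasurableSet ((fun x => x + c) '' E) := by
  rw [Set.image_add_right]
  exact measurable_add_const _ hE

section Lattice

variable {d : ℕ}

theorem continuous_expFn (lam : Fin d → ℝ) : Continuous (expFn lam) := by
  unfold expFn
  fun_prop

theorem expFn_int_periodic (lam m : Fin d → ℤ) (x : Fin d → ℝ) :
    expFn (fun i => (lam i : ℝ)) (x + fun t => (m t : ℝ)) = expFn (fun i => (lam i : ℝ)) x := by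
  have hsum : ∑ i, (lam i : ℝ) * (x + fun t => (m t : ℝ)) i
      = ∑ i, (lam i : ℝ) * x i + ((∑ i, lam i * m i : ℤ) : ℝ) := by
    push_cast
    simp only [Pi.add_apply, mul_add, Finset.sum_add_distrib]
  rw [expFn, expFn, hsum, Complex.ofReal_add, mul_add, Complex.exp_add, Complex.ofReal_intCast,
    mul_comm _ ((_ : ℤ) : ℂ), Complex.exp_int_mul_two_pi_mul_I, mul_one]

theorem TranslationEquivalent.exists_map_eq {μ μ' : Measure (Fin d → ℝ)}
    (h : TranslationEquivalent μ μ') :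
    ∃ S : (Fin d → ℝ) → (Fin d → ℝ), AEMeasurable S μ ∧
      (∀ x, ∃ m : Fin d → ℤ, S x = x + fun t => (m t : ℝ)) ∧ μ.map S = μ' := by
  classical
  obtain ⟨I, hI, E, k, hE, hcov, hdisj, hcov', hdisj', hmap⟩ := h
  set τ : I → (Fin d → ℝ) → (Fin d → ℝ) := fun i x => x + fun t => (k i t : ℝ)
  let S : (Fin d → ℝ) → (Fin d → ℝ) := fun x =>
    if h : ∃ i, x ∈ E i then τ h.choose x else x
  have hSE : ∀ i, S =ᵐ[μ.restrict (E i)] τ i := by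
    intro i
    filter_upwards [ae_restrict_mem (hE i), ae_restrict_of_ae (ae_forall_eq_of_mem_of_mem hdisj)]
      with x hx huniq
    have hex : ∃ j, x ∈ E j := ⟨i, hx⟩
    simp only [S, dif_pos hex, huniq _ _ hex.choose_spec hx]
  have hμ := eq_sum_restrict_of_ae_partition hE hcov hdisj
  have hSm : AEMeasurable S (Measure.sum fun i => μ.restrict (E i)) :=
    aemeasurable_sum_measure_iff.2 fun i =>
      (measurable_add_const _).aemeasurable.congr (hSE i).symm
  refine ⟨S, by rwa [hμ], fun x => ?_, ?_⟩
  · by_cases hx : ∃ i, x ∈ E i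
    · exact ⟨k hx.choose, dif_pos hx⟩
    · exact ⟨0, by ext; simp [S, hx]⟩
  · rw [eq_sum_restrict_of_ae_partition (fun i => measurableSet_image_add_const (hE i) _) hcov'
      hdisj', hμ, Measure.map_sum hSm]
    congr 1
    ext1 i
    rw [Measure.map_congr (hSE i), hmap]

end Lattice

theorem stmt13_general (d : ℕ) (μ μ' : Measure (Fin d → ℝ))
    (htrans : TranslationEquivalent μ μ') (Γ : Set (Fin d → ℤ))
    (horth : ∀ lam ∈ Γ, ∀ lam' ∈ Γ,
      ∫ x, expFn (fun i => ((lam : Fin d → ℤ) i : ℝ)) x *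
          (starRingEnd ℂ) (expFn (fun i => ((lam' : Fin d → ℤ) i : ℝ)) x) ∂μ
        = if lam = lam' then 1 else 0)
    (hcomplete : ∀ f : (Fin d → ℝ) → ℂ, MemLp f 2 μ →
      (∀ lam ∈ Γ,
        ∫ x, f x * (starRingEnd ℂ) (expFn (fun i => ((lam : Fin d → ℤ) i : ℝ)) x) ∂μ = 0) →
      f =ᵐ[μ] 0) :
    (∀ lam ∈ Γ, ∀ lam' ∈ Γ,
      ∫ x, expFn (fun i => ((lam : Fin d → ℤ) i : ℝ)) x *
          (starRingEnd ℂ) (expFn (fun i => ((lam' : Fin d → ℤ) i : ℝ)) x) ∂μ'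
        = if lam = lam' then 1 else 0) ∧
    (∀ f : (Fin d → ℝ) → ℂ, MemLp f 2 μ' →
      (∀ lam ∈ Γ,
        ∫ x, f x * (starRingEnd ℂ) (expFn (fun i => ((lam : Fin d → ℤ) i : ℝ)) x) ∂μ' = 0) →
      f =ᵐ[μ'] 0) := by
  obtain ⟨S, hS, hS_shift, rfl⟩ := htrans.exists_map_eq
  have hinv : ∀ (lam : Fin d → ℤ) x,
      expFn (fun i => (lam i : ℝ)) (S x) = expFn (fun i => (lam i : ℝ)) x := by
    intro lam x
    obtain ⟨m, hm⟩ := hS_shift x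
    rw [hm, expFn_int_periodic]
  refine ⟨fun lam hlam lam' hlam' => ?_, fun f hf hfe => ?_⟩
  · have hcont : Continuous fun x =>
        expFn (fun i => (lam i : ℝ)) x * starRingEnd ℂ (expFn (fun i => (lam' i : ℝ)) x) :=
      (continuous_expFn _).mul (Complex.continuous_conj.comp (continuous_expFn _))
    rw [integral_map_eq_integral_of_comp_eq hS hcont.aestronglyMeasurable fun x => by
      simp only [hinv]]
    exact horth lam hlam lam' hlam'
  · exact ae_eq_zero_map_of_forall_integral_mul_conj_eq_zero Γ
      (fun lam => expFn fun i => (lam i : ℝ)) hS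
      (fun _ _ => (continuous_expFn _).aestronglyMeasurable) (fun lam _ => hinv lam)
      hcomplete hf hfe

/-- if `μ` and `μ'` are translation equivalent Borel probability measures on `ℝ^d`
and `μ` has a spectrum `Γ ⊆ ℤ^d`, then `Γ` is also a spectrum for `μ'`. -/
theorem stmt13 (d : ℕ) (μ μ' : Measure (Fin d → ℝ))
    [IsProbabilityMeasure μ] [IsProbabilityMeasure μ']
    (htrans : TranslationEquivalent μ μ') (Γ : Set (Fin d → ℤ))
    (horth : ∀ lam ∈ Γ, ∀ lam' ∈ Γ,
      ∫ x, expFn (fun i => ((lam : Fin d → ℤ) i : ℝ)) x *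
          (starRingEnd ℂ) (expFn (fun i => ((lam' : Fin d → ℤ) i : ℝ)) x) ∂μ
        = if lam = lam' then 1 else 0)
    (hcomplete : ∀ f : (Fin d → ℝ) → ℂ, MemLp f 2 μ →
      (∀ lam ∈ Γ,
        ∫ x, f x * (starRingEnd ℂ) (expFn (fun i => ((lam : Fin d → ℤ) i : ℝ)) x) ∂μ = 0) →
      f =ᵐ[μ] 0) :
    (∀ lam ∈ Γ, ∀ lam' ∈ Γ,
      ∫ x, expFn (fun i => ((lam : Fin d → ℤ) i : ℝ)) x *
          (starRingEnd ℂ) (expFn (fun i => ((lam' : Fin d → ℤ) i : ℝ)) x) ∂μ'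
        = if lam = lam' then 1 else 0) ∧
    (∀ f : (Fin d → ℝ) → ℂ, MemLp f 2 μ' →
      (∀ lam ∈ Γ,
        ∫ x, f x * (starRingEnd ℂ) (expFn (fun i => ((lam : Fin d → ℤ) i : ℝ)) x) ∂μ' = 0) →
      f =ᵐ[μ'] 0) :=
  stmt13_general d μ μ' htrans Γ horth hcomplete
end

section
/- Let μ and μ' be translation equivalent Borel probability measures on ℝ^d via partition (E_i) and translations (k_i) ∈ ℤ^d. Define ψ(x) = x + k_i for x ∈ E_i. Then the composition operator Ψ : L²(μ') → L²(μ), Ψf = f ∘ ψ, is an isometric isomorphism satisfying Ψ(e_λ) = e_λ for all λ ∈ ℤ^d. -/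
open MeasureTheory Complex

/-!
The measures are glued from the pieces `μ|E i` and `ν|T i '' E i`, which `T i` identifies, so
`∫⁻ h ∘ ψ ∂μ = ∫⁻ h ∂ν` for every `h`; this gives `ψ_* μ = ν` and the isometry. The images of
distinct pieces meet in a `ν`-null set, so `ψ` is injective off a `μ`-null set and has a measurable
a.e. left inverse, which makes `f ↦ f ∘ ψ` onto. Exponentials with integer frequencies are
invariant under integer translations.
-/

section PiecewiseEquivalence

open Function

variable {α β I : Type*} [MeasurableSpace α] [MeasurableSpace β]

theorem MeasureTheory.Measure.sum_restrict_of_ae_mem_iUnion [Countable I] {μ : Measure α}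
    {s : I → Set α} (hd : Pairwise (AEDisjoint μ on s)) (hm : ∀ i, NullMeasurableSet (s i) μ)
    (hc : ∀ᵐ x ∂μ, x ∈ ⋃ i, s i) : Measure.sum (fun i => μ.restrict (s i)) = μ := by
  rw [← Measure.restrict_iUnion_ae hd hm, Measure.restrict_eq_self_of_ae_mem hc]

/-- Translation equivalence (Definition 2.6), with the translations `x ↦ x + k_i` replaced by
arbitrary measurable embeddings `T i`. -/
structure IsPiecewiseEquivalence (μ : Measure α) (ν : Measure β) (E : I → Set α)
    (T : I → α → β) : Prop where
  measurableSet : ∀ i, MeasurableSet (E i)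
  measurableEmbedding : ∀ i, MeasurableEmbedding (T i)
  ae_mem_iUnion : ∀ᵐ x ∂μ, x ∈ ⋃ i, E i
  aedisjoint : Pairwise (AEDisjoint μ on E)
  ae_mem_iUnion_image : ∀ᵐ y ∂ν, y ∈ ⋃ i, T i '' E i
  aedisjoint_image : Pairwise (AEDisjoint ν on fun i => T i '' E i)
  map_restrict : ∀ i, (μ.restrict (E i)).map (T i) = ν.restrict (T i '' E i)

namespace IsPiecewiseEquivalence

variable {μ : Measure α} {ν : Measure β} {E : I → Set α} {T : I → α → β} {ψ : α → β}

theorem measurableSet_image (h : IsPiecewiseEquivalence μ ν E T) (i : I) :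
    MeasurableSet (T i '' E i) :=
  (h.measurableEmbedding i).measurableSet_image' (h.measurableSet i)

theorem measure_inter_preimage_image_eq_zero (h : IsPiecewiseEquivalence μ ν E T) {i j : I}
    (hij : i ≠ j) : μ (E i ∩ T i ⁻¹' (T j '' E j)) = 0 := by
  have hm := h.measurableSet_image j
  rw [Set.inter_comm, ← Measure.restrict_apply ((h.measurableEmbedding i).measurable hm),
    ← Measure.map_apply (h.measurableEmbedding i).measurable hm, h.map_restrict,
    Measure.restrict_apply hm, Set.inter_comm]
  exact h.aedisjoint_image hij

variable [Countable I]

theorem lintegral_comp (h : IsPiecewiseEquivalence μ ν E T) (hψ : ∀ i, Set.EqOn ψ (T i) (E i))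
    (g : β → ENNReal) : ∫⁻ x, g (ψ x) ∂μ = ∫⁻ y, g y ∂ν := by
  have hμ := Measure.sum_restrict_of_ae_mem_iUnion h.aedisjoint
    (fun i => (h.measurableSet i).nullMeasurableSet) h.ae_mem_iUnion
  have hν := Measure.sum_restrict_of_ae_mem_iUnion h.aedisjoint_image
    (fun i => (h.measurableSet_image i).nullMeasurableSet) h.ae_mem_iUnion_image
  calc ∫⁻ x, g (ψ x) ∂μ = ∑' i, ∫⁻ x in E i, g (ψ x) ∂μ := by
        rw [← lintegral_sum_measure, hμ]
    _ = ∑' i, ∫⁻ x in E i, g (T i x) ∂μ := tsum_congr fun i =>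
        setLIntegral_congr_fun (h.measurableSet i) fun x hx => by rw [hψ i hx]
    _ = ∑' i, ∫⁻ y in T i '' E i, g y ∂ν := tsum_congr fun i => by
        rw [← h.map_restrict, (h.measurableEmbedding i).lintegral_map]
    _ = ∫⁻ y, g y ∂ν := by
        rw [← lintegral_sum_measure, hν]

theorem map_eq (h : IsPiecewiseEquivalence μ ν E T) (hψ : ∀ i, Set.EqOn ψ (T i) (E i))
    (hψm : Measurable ψ) : μ.map ψ = ν := by
  ext s hs
  rw [Measure.map_apply hψm hs, ← lintegral_indicator_one (hψm hs),
    ← lintegral_indicator_one hs, ← h.lintegral_comp hψ]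
  rfl

theorem eLpNorm_comp {F : Type*} [NormedAddCommGroup F] (h : IsPiecewiseEquivalence μ ν E T)
    (hψ : ∀ i, Set.EqOn ψ (T i) (E i)) (f : β → F) {p : ENNReal} (hp : p ≠ ⊤) :
    eLpNorm (f ∘ ψ) p μ = eLpNorm f p ν := by
  rcases eq_or_ne p 0 with rfl | hp0
  · simp only [eLpNorm_exponent_zero]
  rw [eLpNorm_eq_lintegral_rpow_enorm_toReal hp0 hp,
    eLpNorm_eq_lintegral_rpow_enorm_toReal hp0 hp]
  exact congrArg (· ^ _) (h.lintegral_comp hψ fun y => ‖f y‖ₑ ^ p.toReal)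

theorem ae_image_unique (h : IsPiecewiseEquivalence μ ν E T) :
    ∀ᵐ x ∂μ, ∀ i j, x ∈ E i → T i x ∈ T j '' E j → i = j := by
  simp only [ae_all_iff]
  intro i j
  rcases eq_or_ne i j with rfl | hij
  · exact Filter.Eventually.of_forall fun _ _ _ => rfl
  filter_upwards [measure_eq_zero_iff_ae_notMem.mp (h.measure_inter_preimage_image_eq_zero hij)]
    with x hx hxi hTx
  exact absurd ⟨hxi, hTx⟩ hx

open Classical in
theorem exists_measurable_ae_leftInverse [Nonempty α] (h : IsPiecewiseEquivalence μ ν E T)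
    (hψ : ∀ i, Set.EqOn ψ (T i) (E i)) : ∃ φ : β → α, Measurable φ ∧ ∀ᵐ x ∂μ, φ (ψ x) = x := by
  rcases isEmpty_or_nonempty I with hI | hI
  · refine ⟨fun _ => Classical.arbitrary α, measurable_const, ?_⟩
    filter_upwards [h.ae_mem_iUnion] with x hx
    simp at hx
  choose S hSm hST using fun i =>
    (h.measurableEmbedding i).exists_measurable_extend measurable_id fun _ => ‹Nonempty α›
  obtain ⟨e, he⟩ := exists_surjective_nat I
  -- Points of `β` outside every image are sent to piece `0`, which keeps the selection total.
  let p : ℕ → β → Prop := fun n y => y ∈ T (e n) '' E (e n) ∪ (⋃ i, T i '' E i)ᶜ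
  have hp : ∀ y, ∃ n, p n y := by
    intro y
    by_cases hy : y ∈ ⋃ i, T i '' E i
    · obtain ⟨i, hi⟩ := Set.mem_iUnion.1 hy
      obtain ⟨n, rfl⟩ := he i
      exact ⟨n, Or.inl hi⟩
    · exact ⟨0, Or.inr hy⟩
  have hpm : ∀ n, MeasurableSet {y | p n y} := fun n =>
    (h.measurableSet_image _).union (MeasurableSet.iUnion h.measurableSet_image).compl
  refine ⟨_, Measurable.find (p := p) (fun n => hSm (e n)) hpm hp, ?_⟩
  filter_upwards [h.ae_mem_iUnion, h.ae_image_unique] with x hx huniq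
  obtain ⟨i, hxi⟩ := Set.mem_iUnion.1 hx
  have hTx : ψ x ∈ T i '' E i := ⟨x, hxi, (hψ i hxi).symm⟩
  have hfind : e (Nat.find (hp (ψ x))) = i := by
    rcases Nat.find_spec (hp (ψ x)) with hmem | hout
    · exact (huniq i _ hxi (hψ i hxi ▸ hmem)).symm
    · exact absurd (Set.mem_iUnion.2 ⟨i, hTx⟩) hout
  change S (e (Nat.find (hp (ψ x)))) (ψ x) = x
  rw [hfind, hψ i hxi]
  exact congrFun (hST i) x

theorem exists_memLp_ae_eq_comp [Nonempty α] {F : Type*} [NormedAddCommGroup F] {p : ENNReal}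
    (h : IsPiecewiseEquivalence μ ν E T) (hψ : ∀ i, Set.EqOn ψ (T i) (E i))
    (hψm : Measurable ψ) {g : α → F} (hg : MemLp g p μ) :
    ∃ f : β → F, MemLp f p ν ∧ g =ᵐ[μ] f ∘ ψ := by
  obtain ⟨φ, hφm, hφψ⟩ := h.exists_measurable_ae_leftInverse hψ
  have hcomp : g =ᵐ[μ] (hg.1.mk g ∘ φ) ∘ ψ := by
    filter_upwards [hφψ, hg.1.ae_eq_mk] with x hx hgx
    simp only [Function.comp_apply, hx, hgx]
  have hfm : StronglyMeasurable (hg.1.mk g ∘ φ) := hg.1.stronglyMeasurable_mk.comp_measurable hφm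
  refine ⟨_, ?_, hcomp⟩
  rw [← h.map_eq hψ hψm, memLp_map_measure_iff hfm.aestronglyMeasurable hψm.aemeasurable]
  exact hg.ae_eq hcomp

end IsPiecewiseEquivalence

end PiecewiseEquivalence

theorem expFn_add_intCast {d : ℕ} (lam k : Fin d → ℤ) (x : Fin d → ℝ) :
    expFn (fun i => (lam i : ℝ)) (x + fun t => (k t : ℝ)) = expFn (fun i => (lam i : ℝ)) x := by
  have hsum : ∑ t, (lam t : ℂ) * ((x t : ℂ) + (k t : ℂ))
      = ∑ t, (lam t : ℂ) * (x t : ℂ) + ((∑ t, lam t * k t : ℤ) : ℂ) := by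
    push_cast
    rw [← Finset.sum_add_distrib]
    exact Finset.sum_congr rfl fun t _ => by ring
  simp only [expFn, Pi.add_apply]
  push_cast
  rw [hsum, mul_add, Complex.exp_add, mul_comm _ ((_ : ℤ) : ℂ), Complex.exp_int_mul_two_pi_mul_I,
    mul_one]

theorem stmt14_general (d : ℕ) (μ μ' : Measure (Fin d → ℝ))
    (I : Type) [Countable I] (E : I → Set (Fin d → ℝ)) (k : I → (Fin d → ℤ))
    (hEmeas : ∀ i, MeasurableSet (E i))
    (hcover : μ (Set.univ \ ⋃ i, E i) = 0)
    (hdisj : ∀ i j, i ≠ j → μ (E i ∩ E j) = 0)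
    (hcover' : μ' (Set.univ \ ⋃ i, (fun x => x + fun t => ((k i t : ℝ))) '' E i) = 0)
    (hdisj' : ∀ i j, i ≠ j →
      μ' (((fun x => x + fun t => ((k i t : ℝ))) '' E i) ∩
          ((fun x => x + fun t => ((k j t : ℝ))) '' E j)) = 0)
    (hpush : ∀ i, Measure.map (fun x => x + fun t => ((k i t : ℝ))) (μ.restrict (E i)) =
      μ'.restrict ((fun x => x + fun t => ((k i t : ℝ))) '' E i))
    (ψ : (Fin d → ℝ) → (Fin d → ℝ)) (hψmeas : Measurable ψ)
    (hψ : ∀ i, ∀ x ∈ E i, ψ x = x + fun t => ((k i t : ℝ))) :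
    Measure.map ψ μ = μ' ∧
    (∀ f : (Fin d → ℝ) → ℂ, eLpNorm (f ∘ ψ) 2 μ = eLpNorm f 2 μ') ∧
    (∀ g : (Fin d → ℝ) → ℂ, MemLp g 2 μ →
      ∃ f : (Fin d → ℝ) → ℂ, MemLp f 2 μ' ∧ g =ᵐ[μ] f ∘ ψ) ∧
    (∀ lam : Fin d → ℤ, ∀ᵐ x ∂μ,
      expFn (fun i => (lam i : ℝ)) (ψ x) = expFn (fun i => (lam i : ℝ)) x) := by
  have hE : IsPiecewiseEquivalence μ μ' E fun i x => x + fun t => (k i t : ℝ) :=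
    { measurableSet := hEmeas
      measurableEmbedding := fun i => measurableEmbedding_addRight _
      ae_mem_iUnion := mem_ae_iff.2 (by rwa [Set.compl_eq_univ_sdiff])
      aedisjoint := fun i j hij => hdisj i j hij
      ae_mem_iUnion_image := mem_ae_iff.2 (by rwa [Set.compl_eq_univ_sdiff])
      aedisjoint_image := fun i j hij => hdisj' i j hij
      map_restrict := hpush }
  have hψE : ∀ i, Set.EqOn ψ _ (E i) := hψ
  refine ⟨hE.map_eq hψE hψmeas, fun f => hE.eLpNorm_comp hψE f ENNReal.ofNat_ne_top,
    fun g hg => hE.exists_memLp_ae_eq_comp hψE hψmeas hg, fun lam => ?_⟩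
  filter_upwards [hE.ae_mem_iUnion] with x hx
  obtain ⟨i, hxi⟩ := Set.mem_iUnion.1 hx
  rw [hψ i x hxi, expFn_add_intCast]

/-- if `μ` and `μ'` are translation equivalent via a partition `(E_i)` and integer
translations `(k_i)`, and `ψ(x) = x + k_i` on `E_i`, then `Ψ f = f ∘ ψ` is an isometric
isomorphism `L²(μ') → L²(μ)` fixing every exponential `e_λ`, `λ ∈ ℤ^d`. -/
theorem stmt14 (d : ℕ) (μ μ' : Measure (Fin d → ℝ))
    [IsProbabilityMeasure μ] [IsProbabilityMeasure μ']
    (I : Type) [Countable I] (E : I → Set (Fin d → ℝ)) (k : I → (Fin d → ℤ))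
    (hEmeas : ∀ i, MeasurableSet (E i))
    (hcover : μ (Set.univ \ ⋃ i, E i) = 0)
    (hdisj : ∀ i j, i ≠ j → μ (E i ∩ E j) = 0)
    (hcover' : μ' (Set.univ \ ⋃ i, (fun x => x + fun t => ((k i t : ℝ))) '' E i) = 0)
    (hdisj' : ∀ i j, i ≠ j →
      μ' (((fun x => x + fun t => ((k i t : ℝ))) '' E i) ∩
          ((fun x => x + fun t => ((k j t : ℝ))) '' E j)) = 0)
    (hpush : ∀ i, Measure.map (fun x => x + fun t => ((k i t : ℝ))) (μ.restrict (E i)) =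
      μ'.restrict ((fun x => x + fun t => ((k i t : ℝ))) '' E i))
    (ψ : (Fin d → ℝ) → (Fin d → ℝ)) (hψmeas : Measurable ψ)
    (hψ : ∀ i, ∀ x ∈ E i, ψ x = x + fun t => ((k i t : ℝ))) :
    Measure.map ψ μ = μ' ∧
    (∀ f : (Fin d → ℝ) → ℂ, eLpNorm (f ∘ ψ) 2 μ = eLpNorm f 2 μ') ∧
    (∀ g : (Fin d → ℝ) → ℂ, MemLp g 2 μ →
      ∃ f : (Fin d → ℝ) → ℂ, MemLp f 2 μ' ∧ g =ᵐ[μ] f ∘ ψ) ∧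
    (∀ lam : Fin d → ℤ, ∀ᵐ x ∂μ,
      expFn (fun i => (lam i : ℝ)) (ψ x) = expFn (fun i => (lam i : ℝ)) x) :=
  stmt14_general d μ μ' I E k hEmeas hcover hdisj hcover' hdisj' hpush ψ hψmeas hψ
end
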